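/- arXiv:1709.08263 — 2 statements merged into one kernel-verified Lean document; each statement's English description precedes it below -/
import Mathlib

section
/- Let ℓ : ℂ → ℝ be convex with ℓ(0) = 0. Then for any a, b ∈ ℂ, any m > 1 and any ε with 0 < ε < 1/m, setting C_ε = 1/(ε(m−1)), one has |ℓ(a+b) − ℓ(a)| ≤ ε[ℓ(ma) − m ℓ(a)] + |ℓ(C_ε b)| + |ℓ(−C_ε b)|. -/
/-!
Both one-sided bounds are Jensen's inequality for a three-point convex combination, with
`s = ε (m - 1)` and `c = C_ε b`, so that `s c = b`:
`a + b = ε (m a) + s c + (1 - ε m) a` bounds `ℓ(a + b) - ℓ(a)` from above, and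
`(1 + ε m) a = (a + b) + ε (m a) + s (-c)` bounds it from below. Since `0 < s < 1`, the terms
`s ℓ(±c)` are at most `|ℓ(±c)|`.
-/

open Set

section ConvexReal

variable {E : Type*} [AddCommGroup E] [Module ℝ E] {f : E → ℝ}

theorem ConvexOn.map_smul_add_smul_add_smul_le (hf : ConvexOn ℝ univ f) {p q r : ℝ}
    (hp : 0 ≤ p) (hq : 0 ≤ q) (hr : 0 ≤ r) (hpqr : p + q + r = 1) (x y z : E) :
    f (p • x + q • y + r • z) ≤ p * f x + q * f y + r * f z := by
  have := hf.map_sum_le (t := Finset.univ) (w := ![p, q, r]) (p := ![x, y, z])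
    (by intro i _; fin_cases i <;> simpa) (by simp [Fin.sum_univ_three, hpqr])
    (fun _ _ ↦ mem_univ _)
  simpa [Fin.sum_univ_three] using this

theorem ConvexOn.map_add_smul_sub_le (hf : ConvexOn ℝ univ f) {m ε : ℝ} (hm : 1 ≤ m)
    (hε : 0 ≤ ε) (hεm : ε * m ≤ 1) (a c : E) :
    f (a + (ε * (m - 1)) • c) - f a ≤ ε * (f (m • a) - m * f a) + ε * (m - 1) * f c := by
  have key := hf.map_smul_add_smul_add_smul_le (p := ε) (q := ε * (m - 1)) (r := 1 - ε * m)
    hε (mul_nonneg hε (by linarith)) (by linarith) (by ring) (m • a) c a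
  have hcomb : ε • m • a + (ε * (m - 1)) • c + (1 - ε * m) • a = a + (ε * (m - 1)) • c := by
    module
  rw [hcomb] at key
  linarith

theorem ConvexOn.sub_map_add_smul_le (hf : ConvexOn ℝ univ f) {m ε : ℝ} (hm : 1 ≤ m)
    (hε : 0 ≤ ε) (a c : E) :
    f a - f (a + (ε * (m - 1)) • c) ≤ ε * (f (m • a) - m * f a) + ε * (m - 1) * f (-c) := by
  set D := 1 + ε * m
  have hD : 0 < D := by positivity
  have key := hf.map_smul_add_smul_add_smul_le (p := D⁻¹) (q := ε / D) (r := ε * (m - 1) / D)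
    (by positivity) (div_nonneg hε hD.le) (div_nonneg (mul_nonneg hε (by linarith)) hD.le)
    (by field_simp; ring) (a + (ε * (m - 1)) • c) (m • a) (-c)
  have hcomb : D⁻¹ • (a + (ε * (m - 1)) • c) + (ε / D) • m • a + (ε * (m - 1) / D) • -c = a := by
    calc _ = D⁻¹ • ((a + (ε * (m - 1)) • c) + ε • m • a + (ε * (m - 1)) • -c) := by module
      _ = D⁻¹ • D • a := by congr 1; simp only [D]; module
      _ = a := inv_smul_smul₀ hD.ne' a
  rw [hcomb] at key
  have hDa : D * f a ≤ f (a + (ε * (m - 1)) • c) + ε * f (m • a) + ε * (m - 1) * f (-c) :=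
    calc D * f a
        ≤ D * (D⁻¹ * f (a + (ε * (m - 1)) • c) + ε / D * f (m • a) + ε * (m - 1) / D * f (-c)) :=
          mul_le_mul_of_nonneg_left key hD.le
      _ = _ := by field_simp
  simp only [D] at hDa
  linarith

end ConvexReal

theorem stmt5_general (ℓ : ℂ → ℝ) (hconv : ConvexOn ℝ Set.univ ℓ)
    (a b : ℂ) (m ε : ℝ) (hm : 1 < m) (hε : 0 < ε) (hεm : ε < 1 / m) :
    |ℓ (a + b) - ℓ a| ≤
      ε * (ℓ ((m : ℂ) * a) - m * ℓ a)
      + |ℓ (((1 / (ε * (m - 1)) : ℝ) : ℂ) * b)|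
      + |ℓ (-((1 / (ε * (m - 1)) : ℝ) : ℂ) * b)| := by
  set s := ε * (m - 1) with hs_def
  have hεm' : ε * m < 1 := by rwa [lt_div_iff₀ (by linarith)] at hεm
  have hs : 0 < s := mul_pos hε (by linarith)
  have hs1 : s ≤ 1 := by simp only [s]; linarith
  have hb : a + s • (s⁻¹ • b) = a + b := by rw [smul_inv_smul₀ hs.ne']
  have hle_abs (x : ℝ) : s * x ≤ |x| :=
    (mul_le_mul_of_nonneg_left (le_abs_self x) hs.le).trans
      (mul_le_of_le_one_left (abs_nonneg x) hs1)
  have upper := hconv.map_add_smul_sub_le hm.le hε.le hεm'.le a (s⁻¹ • b)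
  have lower := hconv.sub_map_add_smul_le hm.le hε.le a (s⁻¹ • b)
  rw [← hs_def, hb] at upper lower
  simp only [Complex.real_smul, one_div, neg_mul] at upper lower ⊢
  rw [abs_sub_le_iff]
  constructor
  · linarith [hle_abs (ℓ (↑s⁻¹ * b)), abs_nonneg (ℓ (-(↑s⁻¹ * b)))]
  · linarith [hle_abs (ℓ (-(↑s⁻¹ * b))), abs_nonneg (ℓ (↑s⁻¹ * b))]

/-- The Brezis–Lieb convexity lemma: for convex `ℓ : ℂ → ℝ` with `ℓ 0 = 0`,
`|ℓ(a+b) − ℓ(a)| ≤ ε[ℓ(ma) − m ℓ(a)] + |ℓ(C_ε b)| + |ℓ(−C_ε b)|`,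
where `C_ε = 1/(ε(m−1))`. -/
theorem stmt5 (ℓ : ℂ → ℝ) (hconv : ConvexOn ℝ Set.univ ℓ) (h0 : ℓ 0 = 0)
    (a b : ℂ) (m ε : ℝ) (hm : 1 < m) (hε : 0 < ε) (hεm : ε < 1 / m) :
    |ℓ (a + b) - ℓ a| ≤
      ε * (ℓ ((m : ℂ) * a) - m * ℓ a)
      + |ℓ (((1 / (ε * (m - 1)) : ℝ) : ℂ) * b)|
      + |ℓ (-((1 / (ε * (m - 1)) : ℝ) : ℂ) * b)| :=
  stmt5_general ℓ hconv a b m ε hm hε hεm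
end

section
/- Let 1 < p < q < ∞ and let V be a normed space embedded in L^q. Define the Nehari set N = {u ∈ V \ {0} : ‖u‖_V^p = ∫|u|^q}, d = inf{ (1/p)‖u‖_V^p − (1/q)∫|u|^q : u ∈ N }, and for ρ > 0 the constrained minimum T_ρ = inf{ ‖u‖_V^p : u ∈ V, ∫|u|^q = ρ }. If φ ∈ N attains d (i.e. (1/p)‖φ‖_V^p − (1/q)∫|φ|^q = d), then φ is a minimizer of T_{ρ₀} for ρ₀ = ∫|φ|^q: that is, ‖φ‖_V^p = T_{ρ₀}. -/
/-!
Rescaling `u ↦ t • u` multiplies `‖u‖ ^ p` by `t ^ p` and `F u = ∫ |u| ^ q` by `t ^ q`, so every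
`u` with `F u > 0` has exactly one multiple on the Nehari set `‖v‖ ^ p = F v`, namely
`t ^ (q - p) = ‖u‖ ^ p / F u`. On the Nehari set the energy `(1/p) ‖v‖ ^ p - (1/q) F v` equals
`(1/p - 1/q) ‖v‖ ^ p`, so minimality of `φ` gives `‖φ‖ ^ p ≤ ‖t • u‖ ^ p = t ^ q F φ` for the
Nehari multiple of any `u` with `F u = F φ`. Hence `t ≥ 1`, i.e. `‖u‖ ^ p ≥ F φ = ‖φ‖ ^ p`.
-/

open MeasureTheory

theorem Lp.integral_abs_smul_rpow {X : Type*} [MeasurableSpace X] {μ : Measure X}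
    {r : ENNReal} (c : ℝ) (f : Lp ℝ r μ) (q : ℝ) :
    ∫ x, |(c • f) x| ^ q ∂μ = |c| ^ q * ∫ x, |f x| ^ q ∂μ := by
  rw [← integral_const_mul]
  refine integral_congr_ae ?_
  filter_upwards [Lp.coeFn_smul c f] with x hx
  rw [hx, Pi.smul_apply, smul_eq_mul, abs_mul, Real.mul_rpow (abs_nonneg c) (abs_nonneg _)]

section Nehari

variable {V : Type*} [NormedAddCommGroup V] [NormedSpace ℝ V] {F : V → ℝ} {p q : ℝ}

theorem norm_smul_rpow_of_nonneg {t : ℝ} (ht : 0 ≤ t) (u : V) (p : ℝ) :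
    ‖t • u‖ ^ p = t ^ p * ‖u‖ ^ p := by
  rw [norm_smul, Real.norm_of_nonneg ht, Real.mul_rpow ht (norm_nonneg u)]

theorem exists_smul_norm_rpow_eq (hF : ∀ (t : ℝ) (u : V), F (t • u) = |t| ^ q * F u)
    (hpq : p < q) {u : V} (hu : 0 < F u) (hu0 : u ≠ 0) :
    ∃ t : ℝ, 0 < t ∧ ‖t • u‖ ^ p = F (t • u) ∧ t ^ (q - p) = ‖u‖ ^ p / F u := by
  have hratio : 0 < ‖u‖ ^ p / F u := div_pos (Real.rpow_pos_of_pos (norm_pos_iff.2 hu0) p) hu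
  set t := (‖u‖ ^ p / F u) ^ (q - p)⁻¹
  have ht : 0 < t := Real.rpow_pos_of_pos hratio _
  have htqp : t ^ (q - p) = ‖u‖ ^ p / F u :=
    Real.rpow_inv_rpow hratio.le (sub_pos.2 hpq).ne'
  refine ⟨t, ht, ?_, htqp⟩
  have htq : t ^ q = t ^ (q - p) * t ^ p := by rw [← Real.rpow_add ht, sub_add_cancel]
  rw [norm_smul_rpow_of_nonneg ht.le, hF, abs_of_pos ht, htq, htqp]
  field_simp

theorem norm_rpow_le_of_isMinOn_nehari (hF : ∀ (t : ℝ) (u : V), F (t • u) = |t| ^ q * F u)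
    (hp : 0 < p) (hpq : p < q) {φ : V} (hφ : φ ≠ 0) (hφN : ‖φ‖ ^ p = F φ)
    (hmin : ∀ u : V, u ≠ 0 → ‖u‖ ^ p = F u →
      (1 / p) * ‖φ‖ ^ p - (1 / q) * F φ ≤ (1 / p) * ‖u‖ ^ p - (1 / q) * F u)
    {u : V} (hu : F u = F φ) :
    ‖φ‖ ^ p ≤ ‖u‖ ^ p := by
  have hq : 0 < q := hp.trans hpq
  have hB : 0 < F φ := hφN ▸ Real.rpow_pos_of_pos (norm_pos_iff.2 hφ) p
  have hu0 : u ≠ 0 := by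
    rintro rfl
    have hF0 : F 0 = 0 := by
      simpa [Real.zero_rpow hq.ne'] using hF 0 0
    exact hB.ne' (hu ▸ hF0)
  obtain ⟨t, ht, hvN, htqp⟩ := exists_smul_norm_rpow_eq hF hpq (hu ▸ hB) hu0
  have hcoef : 0 < 1 / p - 1 / q := sub_pos.2 (one_div_lt_one_div_of_lt hp hpq)
  have hle : F φ ≤ ‖t • u‖ ^ p := by
    have := hmin _ (smul_ne_zero ht.ne' hu0) hvN
    rw [← hvN, hφN] at this
    nlinarith
  have hscale : F (t • u) = t ^ q * F φ := by rw [hF, abs_of_pos ht, hu]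
  have ht1 : 1 ≤ t := by
    rw [← Real.rpow_le_rpow_iff zero_le_one ht.le hq, Real.one_rpow]
    rw [hvN, hscale] at hle
    exact le_of_mul_le_mul_right (by linarith) hB
  have := Real.one_le_rpow ht1 (sub_pos.2 hpq).le
  rwa [htqp, hu, one_le_div hB, ← hφN] at this

end Nehari

/-- Lemma 5.9 (abstracted): if `φ` lies on the Nehari set
`N = {u ≠ 0 : ‖u‖_V^p = ∫|u|^q}` and attains the least energy level
`d = inf_N [(1/p)‖u‖_V^p − (1/q)∫|u|^q]`, then `φ` minimizes `‖u‖_V^p` among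
all `u` with `∫|u|^q = ∫|φ|^q`, i.e. `‖φ‖_V^p = T_{ρ₀}` for `ρ₀ = ∫|φ|^q`. -/
theorem stmt16 {X : Type*} [MeasurableSpace X] (μm : Measure X) (p q : ℝ)
    (hp : 1 < p) (hpq : p < q) [Fact (1 ≤ ENNReal.ofReal q)]
    {V : Type*} [NormedAddCommGroup V] [NormedSpace ℝ V]
    (ιq : V →L[ℝ] Lp ℝ (ENNReal.ofReal q) μm)
    (d : ℝ) (φ : V) (hφ : φ ≠ 0)
    (hNehari : ‖φ‖ ^ p = ∫ x, |ιq φ x| ^ q ∂μm)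
    (hφd : (1 / p) * ‖φ‖ ^ p - (1 / q) * ∫ x, |ιq φ x| ^ q ∂μm = d)
    (hmin : ∀ u : V, u ≠ 0 → ‖u‖ ^ p = ∫ x, |ιq u x| ^ q ∂μm →
      d ≤ (1 / p) * ‖u‖ ^ p - (1 / q) * ∫ x, |ιq u x| ^ q ∂μm) :
    sInf {r : ℝ | ∃ u : V,
        (∫ x, |ιq u x| ^ q ∂μm) = (∫ x, |ιq φ x| ^ q ∂μm) ∧ r = ‖u‖ ^ p}
      = ‖φ‖ ^ p := by
  subst hφd
  have hF : ∀ (t : ℝ) (u : V), ∫ x, |ιq (t • u) x| ^ q ∂μm = |t| ^ q * ∫ x, |ιq u x| ^ q ∂μm :=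
    fun t u => by rw [map_smul, Lp.integral_abs_smul_rpow]
  refine IsLeast.csInf_eq ⟨⟨φ, rfl, rfl⟩, ?_⟩
  rintro r ⟨u, hu, rfl⟩
  exact norm_rpow_le_of_isMinOn_nehari hF (zero_lt_one.trans hp) hpq hφ hNehari hmin hu
end
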